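/- Let X be a metrizable, second countable topological space with its Borel σ-algebra, and equip the space of probability measures on X with the σ-algebra generated by the evaluation maps μ ↦ μ(A). Then the set of discrete probability measures, i.e. the set of probability measures μ on X for which there exists a countable set S ⊆ X with μ(X \ S) = 0, is a measurable subset of the space of probability measures. -/

import Mathlib

/-!
A measure is discrete exactly when the points it does not charge carry no mass,
`μ {x | μ {x} = 0} = 0`, its atoms being countable. As the diagonal is measurable,
`(μ, x) ↦ μ {x}` is jointly measurable, and the measure under `μ` of the `μ`-section of a
jointly measurable set depends measurably on `μ`.
-/

open MeasureTheory ProbabilityTheory Set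

namespace MeasureTheory.Measure

variable {β : Type*} [MeasurableSpace β] [MeasurableSingletonClass β]

theorem exists_countable_measure_compl_eq_zero_iff (μ : Measure β) [SFinite μ] :
    (∃ S : Set β, S.Countable ∧ μ Sᶜ = 0) ↔ μ {x | μ {x} = 0} = 0 := by
  constructor
  · rintro ⟨S, hS, hSc⟩
    have hnull : μ (S ∩ {x | μ {x} = 0}) = 0 := by
      rw [← biUnion_of_singleton (S ∩ _), measure_biUnion_null_iff (hS.mono inter_subset_left)]
      exact fun x hx => hx.2
    refine measure_mono_null (fun x hx => ?_) (measure_union_null hSc hnull)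
    by_cases hxS : x ∈ S
    exacts [Or.inr ⟨hxS, hx⟩, Or.inl hxS]
  · intro h
    refine ⟨{x | μ {x} ≠ 0}, ?_, by simpa only [compl_ofPred, not_not] using h⟩
    exact (countable_meas_level_set_pos (μ := μ) measurable_id).mono
      fun x hx => pos_iff_ne_zero.2 hx

end MeasureTheory.Measure

namespace ProbabilityTheory.Kernel

variable {α β : Type*} [MeasurableSpace α] [MeasurableSpace β] [MeasurableEq β]
  (κ : Kernel α β) [IsSFiniteKernel κ]

theorem measurable_measure_singleton : Measurable fun p : α × β => κ p.1 {p.2} :=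
  measurable_kernel_prodMk_left (κ := prodMkRight β κ)
    (measurableSet_eq_fun measurable_snd (measurable_snd.comp measurable_fst))

theorem measurable_measure_setOf_measure_singleton_eq_zero :
    Measurable fun a => κ a {x | κ a {x} = 0} :=
  measurable_kernel_prodMk_left
    (measurable_measure_singleton κ (measurableSet_singleton (0 : ENNReal)))

end ProbabilityTheory.Kernel

/-- On a metrizable second-countable space with its Borel σ-algebra, the set of discrete
probability measures (those carried by some countable set) is a measurable subset of the
space of probability measures, the latter carrying the σ-algebra induced from the
σ-algebra on measures generated by the evaluation maps. -/
theorem measurableSet_discrete_probabilityMeasures {X : Type*} [TopologicalSpace X]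
    [TopologicalSpace.MetrizableSpace X] [SecondCountableTopology X]
    [MeasurableSpace X] [BorelSpace X] :
    MeasurableSet {μ : {ν : Measure X // IsProbabilityMeasure ν} |
      ∃ S : Set X, S.Countable ∧ (μ : Measure X) (Set.univ \ S) = 0} := by
  let κ : Kernel {ν : Measure X // IsProbabilityMeasure ν} X :=
    ⟨Subtype.val, measurable_subtype_coe⟩
  have : IsMarkovKernel κ := ⟨fun μ => μ.2⟩
  convert Kernel.measurable_measure_setOf_measure_singleton_eq_zero κ (measurableSet_singleton 0)
    using 1
  ext μ
  have : IsProbabilityMeasure (μ : Measure X) := μ.2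
  simp only [mem_ofPred_eq, mem_preimage, mem_singleton_iff, ← compl_eq_univ_sdiff]
  exact Measure.exists_countable_measure_compl_eq_zero_iff (μ : Measure X)
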